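/- arXiv:1803.06823 — 2 statements merged into one kernel-verified Lean document; each statement's English description precedes it below -/
import Mathlib

section
/- Let I ⊆ ℝⁿ be a measurable set with Lebesgue measure satisfying 0 < μ(I) < ∞, and let g : ℝⁿ → ℝ be measurable, integrable over I with ∫_I g dμ = 0, and such that exp ∘ g is integrable over I. Set h(x) = exp(g(x)) / ∫_I exp(g) dμ. Then h is a strictly positive probability density on I with integrable logarithm, and clr(h)(x) = g(x) for every x ∈ I; that is, the centred log-ratio transform is a bijection onto the functions on I with zero integral. -/
open MeasureTheory

/-- The centred log-ratio transform of a positive density `f` on `I`. -/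
noncomputable def clr {n : ℕ} (I : Set (Fin n → ℝ)) (f : (Fin n → ℝ) → ℝ) :
    (Fin n → ℝ) → ℝ :=
  fun x => Real.log (f x) - ((volume I).toReal)⁻¹ * ∫ y in I, Real.log (f y)

/-!
Put `C = ∫_I exp g`, which is positive because `exp g > 0` and `μ(I) > 0`. Then `h = exp g / C`
integrates to `1`, and `log h = g - log C` differs from `g` by a constant; since `g` has zero
integral, the mean of `log h` over `I` is `-log C`, so centring `log h` gives back `g`.
-/

namespace MeasureTheory

variable {α : Type*} [MeasurableSpace α] {μ : Measure α} {s : Set α} {g : α → ℝ}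

noncomputable def clrInv (μ : Measure α) (s : Set α) (g : α → ℝ) : α → ℝ :=
  fun x => Real.exp (g x) / ∫ y in s, Real.exp (g y) ∂μ

lemma setIntegral_exp_pos (hs : μ s ≠ 0) (hexp : IntegrableOn (fun x => Real.exp (g x)) s μ) :
    0 < ∫ x in s, Real.exp (g x) ∂μ :=
  have : NeZero (μ s) := ⟨hs⟩
  integral_exp_pos hexp

lemma clrInv_pos (hs : μ s ≠ 0) (hexp : IntegrableOn (fun x => Real.exp (g x)) s μ) (x : α) :
    0 < clrInv μ s g x :=
  div_pos (Real.exp_pos _) (setIntegral_exp_pos hs hexp)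

lemma integrableOn_clrInv (hexp : IntegrableOn (fun x => Real.exp (g x)) s μ) :
    IntegrableOn (clrInv μ s g) s μ :=
  hexp.div_const _

lemma setIntegral_clrInv (hs : μ s ≠ 0) (hexp : IntegrableOn (fun x => Real.exp (g x)) s μ) :
    ∫ x in s, clrInv μ s g x ∂μ = 1 := by
  unfold clrInv
  rw [integral_div, div_self (setIntegral_exp_pos hs hexp).ne']

lemma log_clrInv (hs : μ s ≠ 0) (hexp : IntegrableOn (fun x => Real.exp (g x)) s μ) (x : α) :
    Real.log (clrInv μ s g x) = g x - Real.log (∫ y in s, Real.exp (g y) ∂μ) := by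
  rw [clrInv, Real.log_div (Real.exp_ne_zero _) (setIntegral_exp_pos hs hexp).ne', Real.log_exp]

lemma integrableOn_log_clrInv (hs : μ s ≠ 0) (hs' : μ s ≠ ⊤) (hg : IntegrableOn g s μ)
    (hexp : IntegrableOn (fun x => Real.exp (g x)) s μ) :
    IntegrableOn (fun x => Real.log (clrInv μ s g x)) s μ := by
  simp_rw [log_clrInv hs hexp]
  exact hg.sub (integrableOn_const hs')

lemma setIntegral_log_clrInv (hs : μ s ≠ 0) (hs' : μ s ≠ ⊤) (hg : IntegrableOn g s μ)
    (hg0 : ∫ x in s, g x ∂μ = 0) (hexp : IntegrableOn (fun x => Real.exp (g x)) s μ) :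
    ∫ x in s, Real.log (clrInv μ s g x) ∂μ =
      -(μ s).toReal * Real.log (∫ y in s, Real.exp (g y) ∂μ) := by
  simp_rw [log_clrInv hs hexp]
  rw [integral_sub hg (integrableOn_const hs'), hg0, setIntegral_const, smul_eq_mul,
    Measure.real]
  ring

end MeasureTheory

lemma clr_clrInv {n : ℕ} {I : Set (Fin n → ℝ)} {g : (Fin n → ℝ) → ℝ} (h0 : volume I ≠ 0)
    (h1 : volume I ≠ ⊤) (hg : IntegrableOn g I) (hg0 : ∫ x in I, g x = 0)
    (hexp : IntegrableOn (fun x => Real.exp (g x)) I) (x : Fin n → ℝ) :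
    clr I (clrInv volume I g) x = g x := by
  have hμ : (volume I).toReal ≠ 0 := ENNReal.toReal_ne_zero.mpr ⟨h0, h1⟩
  rw [clr, log_clrInv h0 hexp, setIntegral_log_clrInv h0 h1 hg hg0 hexp]
  field_simp
  ring

theorem clr_inv_is_density_and_section_general {n : ℕ} (I : Set (Fin n → ℝ))
    (h0 : 0 < volume I) (h1 : volume I < ⊤)
    (g : (Fin n → ℝ) → ℝ)
    (hint : IntegrableOn g I) (hzero : (∫ x in I, g x) = 0)
    (hexp : IntegrableOn (fun x => Real.exp (g x)) I)
    (h : (Fin n → ℝ) → ℝ)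
    (hdef : h = fun x => Real.exp (g x) / ∫ y in I, Real.exp (g y)) :
    (∀ x ∈ I, 0 < h x) ∧ IntegrableOn h I ∧ (∫ x in I, h x) = 1 ∧
      IntegrableOn (fun x => Real.log (h x)) I ∧ (∀ x ∈ I, clr I h x = g x) := by
  change h = clrInv volume I g at hdef
  subst hdef
  exact ⟨fun x _ => clrInv_pos h0.ne' hexp x, integrableOn_clrInv hexp,
    setIntegral_clrInv h0.ne' hexp, integrableOn_log_clrInv h0.ne' h1.ne hint hexp,
    fun x _ => clr_clrInv h0.ne' h1.ne hint hzero hexp x⟩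

/-- the inverse centred log-ratio transform of a zero-integral
function `g` is a strictly positive probability density on `I` with integrable
logarithm, and its clr transform is `g` on `I` (so clr is onto the zero-integral
functions, with inverse `clr⁻¹`). -/
theorem clr_inv_is_density_and_section {n : ℕ} (I : Set (Fin n → ℝ))
    (hI : MeasurableSet I) (h0 : 0 < volume I) (h1 : volume I < ⊤)
    (g : (Fin n → ℝ) → ℝ) (hmeas : Measurable g)
    (hint : IntegrableOn g I) (hzero : (∫ x in I, g x) = 0)
    (hexp : IntegrableOn (fun x => Real.exp (g x)) I)
    (h : (Fin n → ℝ) → ℝ)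
    (hdef : h = fun x => Real.exp (g x) / ∫ y in I, Real.exp (g y)) :
    (∀ x ∈ I, 0 < h x) ∧ IntegrableOn h I ∧ (∫ x in I, h x) = 1 ∧
      IntegrableOn (fun x => Real.log (h x)) I ∧ (∀ x ∈ I, clr I h x = g x) :=
  clr_inv_is_density_and_section_general I h0 h1 g hint hzero hexp h hdef
end

section
/- Let δ : ℝ → ℝ and λ ∈ ℝ. If (1 − 2u + δ(u))/(1 − u) tends to λ as u → 1 from the left, then log(δ(u))/log(u) tends to 2 − λ as u → 1 from the left. In particular, the upper tail dependence coefficient λ_U = lim_{u→1⁻} (1 − 2u + C(u,u))/(1 − u) of a copula C equals 2 − lim_{u→1⁻} log(C(u,u))/log(u). -/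
open Filter Topology

noncomputable def gslope (x : ℝ) : ℝ := if x = 1 then 1 else Real.log x / (x - 1)

lemma log_eq_gslope (x : ℝ) : Real.log x = gslope x * (x - 1) := by
  unfold gslope
  by_cases hx : x = 1
  · simp [hx]
  · rw [if_neg hx, div_mul_cancel₀ _ (sub_ne_zero.mpr hx)]

lemma gslope_tendsto : Tendsto gslope (𝓝 (1 : ℝ)) (𝓝 1) := by
  nth_rewrite 1 [← nhdsNE_sup_pure (1 : ℝ)]
  rw [tendsto_sup]
  constructor
  · have hd : HasDerivAt Real.log 1 1 := by
      simpa using Real.hasDerivAt_log one_ne_zero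
    have := hasDerivAt_iff_tendsto_slope.mp hd
    refine this.congr' ?_
    filter_upwards [self_mem_nhdsWithin] with x hx
    simp only [Set.mem_compl_iff, Set.mem_singleton_iff] at hx
    simp [slope, gslope, hx, Real.log_one, div_eq_inv_mul]
  · have h1 : gslope 1 = 1 := by simp [gslope]
    simpa [h1] using tendsto_pure_nhds gslope 1

/-- if `(1 − 2u + δ(u))/(1 − u) → λ` as `u → 1⁻`, then
`log(δ(u))/log(u) → 2 − λ` as `u → 1⁻`.  In particular the upper tail
dependence coefficient `λ_U` of a copula with diagonal `δ(u) = C(u,u)` equals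
`2 − lim_{u→1⁻} log(C(u,u))/log(u)`. -/
theorem upper_tdc_log_form (δ : ℝ → ℝ) (l : ℝ)
    (h : Tendsto (fun u => (1 - 2 * u + δ u) / (1 - u)) (𝓝[<] (1 : ℝ)) (𝓝 l)) :
    Tendsto (fun u => Real.log (δ u) / Real.log u) (𝓝[<] (1 : ℝ)) (𝓝 (2 - l)) := by
  have hu1 : ∀ᶠ u in 𝓝[<] (1 : ℝ), u < 1 := self_mem_nhdsWithin
  have hone : Tendsto (fun u : ℝ => 1 - u) (𝓝[<] (1 : ℝ)) (𝓝 0) := by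
    have : Tendsto (fun u : ℝ => 1 - u) (𝓝 (1 : ℝ)) (𝓝 0) := by
      have : Tendsto (fun u : ℝ => 1 - u) (𝓝 (1:ℝ)) (𝓝 (1 - 1)) :=
        tendsto_const_nhds.sub tendsto_id
      simpa using this
    exact this.mono_left nhdsWithin_le_nhds
  have h2u : Tendsto (fun u : ℝ => 2 * u - 1) (𝓝[<] (1 : ℝ)) (𝓝 1) := by
    have : Tendsto (fun u : ℝ => 2 * u - 1) (𝓝 (1 : ℝ)) (𝓝 1) := by
      have : Tendsto (fun u : ℝ => 2 * u - 1) (𝓝 (1:ℝ)) (𝓝 (2 * 1 - 1)) :=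
        (tendsto_const_nhds.mul tendsto_id).sub tendsto_const_nhds
      norm_num at this
      exact this
    exact this.mono_left nhdsWithin_le_nhds
  have hδ : Tendsto δ (𝓝[<] (1 : ℝ)) (𝓝 1) := by
    have hmul : Tendsto (fun u => (1 - 2 * u + δ u) / (1 - u) * (1 - u) + (2 * u - 1))
        (𝓝[<] (1 : ℝ)) (𝓝 1) := by
      have := (h.mul hone).add h2u
      simpa using this
    refine hmul.congr' ?_
    filter_upwards [hu1] with u hu
    have h1u : (1 : ℝ) - u ≠ 0 := sub_ne_zero.mpr (ne_of_gt (by linarith))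
    field_simp
    ring
  have hgδ : Tendsto (fun u => gslope (δ u)) (𝓝[<] (1 : ℝ)) (𝓝 1) := gslope_tendsto.comp hδ
  have hgu : Tendsto (fun u : ℝ => gslope u) (𝓝[<] (1 : ℝ)) (𝓝 1) :=
    gslope_tendsto.mono_left nhdsWithin_le_nhds
  have hgne : ∀ᶠ u in 𝓝[<] (1 : ℝ), gslope u ≠ 0 := hgu.eventually_ne one_ne_zero
  have hmain : Tendsto (fun u => gslope (δ u) / gslope u * (2 - (1 - 2 * u + δ u) / (1 - u)))
      (𝓝[<] (1 : ℝ)) (𝓝 (2 - l)) := by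
    have := (hgδ.div hgu one_ne_zero).mul ((tendsto_const_nhds (x := (2:ℝ))).sub h)
    simpa using this
  refine hmain.congr' ?_
  filter_upwards [hu1, hgne] with u hu hg
  have h1u : u - 1 ≠ 0 := sub_ne_zero.mpr (ne_of_lt hu)
  have h1u' : (1 : ℝ) - u ≠ 0 := sub_ne_zero.mpr (ne_of_gt (by linarith))
  rw [log_eq_gslope (δ u), log_eq_gslope u]
  field_simp
  ring
end
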